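/- In P = ℂ[a,b,c,d,e] with the bracket determined by the stated table, let κ = e² − abe − cd + (a²d + b²c)/2 (equal to H'² + 4E'F' for H' = e − ab/2, E' = d/2 − b²/4, F' = −c/2 + a²/4). Then a polynomial f ∈ P satisfies {f,g} = 0 for all g ∈ P if and only if f lies in the ℂ-subalgebra generated by κ; that is, the Poisson center of P is the polynomial algebra ℂ[κ]. -/

import Mathlib

open MvPolynomial

noncomputable section

/-- The variables a, b, c, d, e of P = ℂ[a,b,c,d,e] are `X 0, X 1, X 2, X 3, X 4`
in `MvPolynomial (Fin 5) ℂ`.  `brTable u v` is the table of brackets of generators: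
{a,b} = 2, {a,c} = 0, {a,d} = 2b, {a,e} = a, {b,c} = −2a, {b,d} = 0, {b,e} = −b,
{c,d} = 4e, {c,e} = 2c, {d,e} = −2d, extended antisymmetrically. -/
def brTable : Fin 5 → Fin 5 → MvPolynomial (Fin 5) ℂ :=
  ![![0,        2,        0,          2 * X 1,    X 0],
    ![-2,       0,        -(2 * X 0), 0,          -(X 1)],
    ![0,        2 * X 0,  0,          4 * X 4,    2 * X 2],
    ![-(2 * X 1), 0,      -(4 * X 4), 0,          -(2 * X 3)],
    ![-(X 0),   X 1,      -(2 * X 2), 2 * X 3,    0]]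

/-- The Poisson bracket on P = ℂ[a,b,c,d,e] determined by the table:
{f,g} = Σ_{u,v} {u,v}·(∂f/∂u)·(∂g/∂v). -/
def pb5 (f g : MvPolynomial (Fin 5) ℂ) : MvPolynomial (Fin 5) ℂ :=
  ∑ u : Fin 5, ∑ v : Fin 5, brTable u v * pderiv u f * pderiv v g

/-- H' = e − ab/2. -/
def H' : MvPolynomial (Fin 5) ℂ := X 4 - C (1 / 2 : ℂ) * (X 0 * X 1)

/-- E' = d/2 − b²/4. -/
def E' : MvPolynomial (Fin 5) ℂ := C (1 / 2 : ℂ) * X 3 - C (1 / 4 : ℂ) * X 1 ^ 2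

/-- F' = −c/2 + a²/4. -/
def F' : MvPolynomial (Fin 5) ℂ := -(C (1 / 2 : ℂ) * X 2) + C (1 / 4 : ℂ) * X 0 ^ 2

/-- κ = e² − abe − cd + (a²d + b²c)/2 (which equals H'² + 4E'F'). -/
def kappa : MvPolynomial (Fin 5) ℂ :=
  X 4 ^ 2 - X 0 * X 1 * X 4 - X 2 * X 3 +
    C (1 / 2 : ℂ) * (X 0 ^ 2 * X 3 + X 1 ^ 2 * X 2)

/-!
In the coordinates `a, b, c' = 2c - a², d' = 2d - b², e' = 2e - ab` the bracket splits:
`{a, b} = 2`, the variables `a, b` commute with `c', d', e'`, and these span a copy of `sl₂`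
(`{c', d'} = 8e'`, `{c', e'} = 4c'`, `{d', e'} = -4d'`). A central polynomial is therefore
independent of `a` and `b`; bracketing with `e'` says it has weight zero for the torus
scaling `c'` and `d'` oppositely, so it is a polynomial `h(c'd', e')`; bracketing with `d'`
then gives `2e' ∂₁h + ∂₂h = 0`, whose solutions are the polynomials in `e'² - c'd' = 4κ`.
-/

theorem Derivation.map_ofNat {R A M : Type*} [CommSemiring R] [CommSemiring A] [Algebra R A]
    [AddCommMonoid M] [Module A M] [Module R M] (D : Derivation R A M) (n : ℕ) [n.AtLeastTwo] :
    D (no_index (OfNat.ofNat n : A)) = 0 :=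
  D.map_natCast n

theorem Algebra.adjoin_singleton_smul {K A : Type*} [Field K] [Semiring A] [Algebra K A] {c : K}
    (hc : c ≠ 0) (x : A) :
    Algebra.adjoin K ({c • x} : Set A) = Algebra.adjoin K ({x} : Set A) := by
  refine le_antisymm (Algebra.adjoin_le ?_) (Algebra.adjoin_le ?_) <;>
    rw [Set.singleton_subset_iff]
  · exact Subalgebra.smul_mem _ (Algebra.self_mem_adjoin_singleton K x) c
  · simpa [hc] using Subalgebra.smul_mem _ (Algebra.self_mem_adjoin_singleton K (c • x)) c⁻¹

namespace MvPolynomial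

theorem monomial_fin_five {R : Type*} [CommSemiring R] (m : Fin 5 →₀ ℕ) (r : R) :
    monomial m r = C r * X 0 ^ m 0 * X 1 ^ m 1 * X 2 ^ m 2 * X 3 ^ m 3 * X 4 ^ m 4 := by
  rw [monomial_eq, Finsupp.prod_fintype _ _ fun _ => pow_zero _, Fin.prod_univ_five]
  ring

theorem C_half_mul_two {σ : Type*} : (C (1 / 2 : ℂ) : MvPolynomial σ ℂ) * 2 = 1 := by
  rw [← map_ofNat C 2, ← C_mul]
  norm_num

section PDeriv

variable {R σ τ : Type*} [CommSemiring R]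

theorem pderiv_aeval [Fintype τ] (v : τ → MvPolynomial σ R) (p : MvPolynomial τ R) (i : σ) :
    pderiv i (aeval v p) = ∑ j, aeval v (pderiv j p) * pderiv i (v j) := by
  classical
  induction p using MvPolynomial.induction_on with
  | C a => simp
  | add p q hp hq => simp only [map_add, hp, hq, add_mul, Finset.sum_add_distrib]
  | mul_X p k hp =>
    simp only [map_mul, aeval_X, pderiv_mul, hp, map_add, add_mul, Finset.sum_add_distrib,
      Finset.sum_mul]
    congr 1
    · exact Finset.sum_congr rfl fun _ _ => by ring
    · simp [pderiv_X, Pi.single_apply]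

theorem coeff_X_mul_pderiv (i : σ) (p : MvPolynomial σ R) (m : σ →₀ ℕ) :
    coeff m (X i * pderiv i p) = m i * coeff m p := by
  induction p using MvPolynomial.induction_on' with
  | monomial s a =>
    classical
    rw [X_mul_pderiv_monomial, coeff_smul, coeff_monomial]
    split_ifs with h <;> simp [h]
  | add p q hp hq => simp only [map_add, mul_add, coeff_add, hp, hq]

end PDeriv

section CharZero

variable {R σ : Type*} [CommRing R] [IsDomain R] [CharZero R] {p : MvPolynomial σ R}
  {m : σ →₀ ℕ}

theorem exponent_eq_zero_of_pderiv_eq_zero {i : σ} (h : pderiv i p = 0) (hm : m ∈ p.support) :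
    m i = 0 := by
  classical
  by_contra hmi
  have hle : Finsupp.single i 1 ≤ m := Finsupp.single_le_iff.mpr (Nat.one_le_iff_ne_zero.mpr hmi)
  have := coeff_pderiv (i := i) p (m - Finsupp.single i 1)
  rw [h, coeff_zero, tsub_add_cancel_of_le hle] at this
  exact mem_support_iff.mp hm
    ((mul_eq_zero.mp this.symm).resolve_right (Nat.cast_add_one_ne_zero _))

theorem exponent_eq_of_X_mul_pderiv_eq {i j : σ} (h : X i * pderiv i p = X j * pderiv j p)
    (hm : m ∈ p.support) : m i = m j := by
  have := congrArg (coeff m) h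
  rw [coeff_X_mul_pderiv, coeff_X_mul_pderiv] at this
  exact_mod_cast mul_right_cancel₀ (mem_support_iff.mp hm) this

theorem mem_adjoin_X_zero_of_pderiv_one_eq_zero {q : MvPolynomial (Fin 2) R}
    (h : pderiv 1 q = 0) : q ∈ Algebra.adjoin R {(X 0 : MvPolynomial (Fin 2) R)} := by
  rw [← Set.image_singleton, ← supported_eq_adjoin_X, mem_supported]
  intro k hk
  obtain ⟨m, hm, hkm⟩ := (mem_vars_iff_mem_support k).mp hk
  fin_cases k
  · rfl
  · exact absurd (exponent_eq_zero_of_pderiv_eq_zero h hm) (Finsupp.mem_support_iff.mp hkm)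

end CharZero

def flipSquare (R : Type*) [CommRing R] : Fin 2 → MvPolynomial (Fin 2) R := ![X 1 ^ 2 - X 0, X 1]

section FlipSquare

variable {R : Type*} [CommRing R]

theorem aeval_flipSquare_aeval_flipSquare (q : MvPolynomial (Fin 2) R) :
    aeval (flipSquare R) (aeval (flipSquare R) q) = q := by
  rw [← AlgHom.comp_apply,
    show (aeval (flipSquare R)).comp (aeval (flipSquare R)) = AlgHom.id R _ from
      algHom_ext fun i => by fin_cases i <;> simp [flipSquare]]
  rfl

-- The involution `flipSquare` straightens the derivation `2 X₁ ∂₀ + ∂₁` into `∂₁`.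
theorem mem_adjoin_of_two_X_one_mul_pderiv_zero_add_pderiv_one [IsDomain R] [CharZero R]
    {h : MvPolynomial (Fin 2) R} (hh : 2 * X 1 * pderiv 0 h + pderiv 1 h = 0) :
    h ∈ Algebra.adjoin R ({X 1 ^ 2 - X 0} : Set (MvPolynomial (Fin 2) R)) := by
  obtain ⟨q, hq⟩ : ∃ q, aeval (flipSquare R) q = h :=
    ⟨_, aeval_flipSquare_aeval_flipSquare h⟩
  have key : aeval (flipSquare R) (pderiv 1 q) = 2 * X 1 * pderiv 0 h + pderiv 1 h := by
    simp [← hq, pderiv_aeval, flipSquare, Fin.sum_univ_two, pderiv_X, -aeval_eq_bind₁]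
    ring
  have hq1 : pderiv 1 q = 0 := by
    rw [← aeval_flipSquare_aeval_flipSquare (pderiv 1 q), key, hh, map_zero]
  rw [← hq, show X 1 ^ 2 - X 0 = aeval (flipSquare R) (X 0 : MvPolynomial (Fin 2) R) by
    simp [flipSquare], ← AlgHom.map_adjoin_singleton]
  exact Subalgebra.mem_map.mpr ⟨q, mem_adjoin_X_zero_of_pderiv_one_eq_zero hq1, rfl⟩

end FlipSquare

end MvPolynomial

section TableBracket

variable {R σ τ : Type*} [CommSemiring R] [Fintype σ] [Fintype τ]

def tableBracket (T : σ → σ → MvPolynomial σ R) (f g : MvPolynomial σ R) :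
    MvPolynomial σ R :=
  ∑ u, ∑ v, T u v * pderiv u f * pderiv v g

variable (T : σ → σ → MvPolynomial σ R)

theorem tableBracket_X_right (f : MvPolynomial σ R) (k : σ) :
    tableBracket T f (X k) = ∑ u, T u k * pderiv u f := by
  classical
  simp [tableBracket, pderiv_X, Pi.single_apply, mul_comm]

def tableCenter : Subalgebra R (MvPolynomial σ R) where
  carrier := {f | ∀ g, tableBracket T f g = 0}
  mul_mem' {p q} hp hq g := by
    have : tableBracket T (p * q) g = p * tableBracket T q g + q * tableBracket T p g := by
      simp only [tableBracket, pderiv_mul, Finset.mul_sum, ← Finset.sum_add_distrib]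
      exact Finset.sum_congr rfl fun _ _ => Finset.sum_congr rfl fun _ _ => by ring
    simp [this, hp g, hq g]
  add_mem' {p q} hp hq g := by
    have : tableBracket T (p + q) g = tableBracket T p g + tableBracket T q g := by
      simp only [tableBracket, map_add, mul_add, add_mul, Finset.sum_add_distrib]
    simp [this, hp g, hq g]
  algebraMap_mem' r g := by simp [tableBracket, algebraMap_eq]

theorem mem_tableCenter {f : MvPolynomial σ R} :
    f ∈ tableCenter T ↔ ∀ g, tableBracket T f g = 0 :=
  Iff.rfl

theorem mem_tableCenter_iff_forall_X {f : MvPolynomial σ R} :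
    f ∈ tableCenter T ↔ ∀ k, tableBracket T f (X k) = 0 := by
  refine ⟨fun hf k => hf (X k), fun hf g => ?_⟩
  calc tableBracket T f g = ∑ v, tableBracket T f (X v) * pderiv v g := by
        rw [tableBracket]
        simp only [tableBracket_X_right, Finset.sum_mul]
        exact Finset.sum_comm
    _ = 0 := by simp [hf]

theorem tableBracket_aeval_left (φ : τ → MvPolynomial σ R) (p : MvPolynomial τ R)
    (g : MvPolynomial σ R) :
    tableBracket T (aeval φ p) g = ∑ j, aeval φ (pderiv j p) * tableBracket T (φ j) g := by
  simp only [tableBracket, pderiv_aeval, Finset.mul_sum, Finset.sum_mul]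
  refine (Finset.sum_congr rfl fun _ _ => Finset.sum_comm).trans ?_
  rw [Finset.sum_comm]
  exact Finset.sum_congr rfl fun _ _ => Finset.sum_congr rfl fun _ _ =>
    Finset.sum_congr rfl fun _ _ => by ring

theorem tableBracket_aeval_right (φ : τ → MvPolynomial σ R) (f : MvPolynomial σ R)
    (q : MvPolynomial τ R) :
    tableBracket T f (aeval φ q) = ∑ k, aeval φ (pderiv k q) * tableBracket T f (φ k) := by
  simp only [tableBracket, pderiv_aeval, Finset.mul_sum]
  refine (Finset.sum_congr rfl fun _ _ => Finset.sum_comm).trans ?_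
  rw [Finset.sum_comm]
  exact Finset.sum_congr rfl fun _ _ => Finset.sum_congr rfl fun _ _ =>
    Finset.sum_congr rfl fun _ _ => by ring

theorem tableBracket_aeval {T' : τ → τ → MvPolynomial τ R} (φ : τ → MvPolynomial σ R)
    (hφ : ∀ j k, tableBracket T (φ j) (φ k) = aeval φ (T' j k)) (p q : MvPolynomial τ R) :
    tableBracket T (aeval φ p) (aeval φ q) = aeval φ (tableBracket T' p q) := by
  rw [tableBracket_aeval_left]
  simp only [tableBracket_aeval_right, hφ, Finset.mul_sum]
  simp only [tableBracket, map_sum, map_mul]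
  exact Finset.sum_congr rfl fun _ _ => Finset.sum_congr rfl fun _ _ => by ring

theorem tableCenter_map {T' : τ → τ → MvPolynomial τ R}
    (e : MvPolynomial τ R ≃ₐ[R] MvPolynomial σ R)
    (he : ∀ p q, tableBracket T (e p) (e q) = e (tableBracket T' p q)) :
    (tableCenter T').map (e : MvPolynomial τ R →ₐ[R] MvPolynomial σ R) = tableCenter T := by
  ext f
  rw [Subalgebra.mem_map]
  constructor
  · rintro ⟨p, hp, rfl⟩ g
    rw [← e.apply_symm_apply g, AlgEquiv.coe_toAlgHom, he, hp, map_zero]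
  · refine fun hf => ⟨e.symm f, fun q => e.injective ?_, e.apply_symm_apply f⟩
    rw [← he, e.apply_symm_apply, hf, map_zero]

end TableBracket

theorem pb5_eq_tableBracket : pb5 = tableBracket brTable :=
  rfl

def splitCoord : Fin 5 → MvPolynomial (Fin 5) ℂ :=
  ![X 0, X 1, 2 * X 2 - X 0 ^ 2, 2 * X 3 - X 1 ^ 2, 2 * X 4 - X 0 * X 1]

def brTableSplit : Fin 5 → Fin 5 → MvPolynomial (Fin 5) ℂ :=
  ![![0,  2, 0,          0,          0],
    ![-2, 0, 0,          0,          0],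
    ![0,  0, 0,          8 * X 4,    4 * X 2],
    ![0,  0, -(8 * X 4), 0,          -(4 * X 3)],
    ![0,  0, -(4 * X 2), 4 * X 3,    0]]

theorem tableBracket_splitCoord (j k : Fin 5) :
    tableBracket brTable (splitCoord j) (splitCoord k) = aeval splitCoord (brTableSplit j k) := by
  fin_cases j <;> fin_cases k <;>
    simp [tableBracket, brTable, brTableSplit, splitCoord, Fin.sum_univ_five, pderiv_X,
      Pi.single_apply, Derivation.map_ofNat, -aeval_eq_bind₁] <;> ring

def splitCoordInv : Fin 5 → MvPolynomial (Fin 5) ℂ :=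
  ![X 0, X 1, C (1 / 2) * (X 2 + X 0 ^ 2), C (1 / 2) * (X 3 + X 1 ^ 2),
    C (1 / 2) * (X 4 + X 0 * X 1)]

theorem aeval_splitCoord_splitCoordInv (i : Fin 5) : aeval splitCoord (splitCoordInv i) = X i := by
  have := C_half_mul_two (σ := Fin 5)
  fin_cases i <;> simp [splitCoord, splitCoordInv, -aeval_eq_bind₁] <;> grind

theorem aeval_splitCoordInv_splitCoord (i : Fin 5) : aeval splitCoordInv (splitCoord i) = X i := by
  have := C_half_mul_two (σ := Fin 5)
  fin_cases i <;> simp [splitCoord, splitCoordInv, -aeval_eq_bind₁] <;> grind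

def splitEquiv : MvPolynomial (Fin 5) ℂ ≃ₐ[ℂ] MvPolynomial (Fin 5) ℂ :=
  AlgEquiv.ofAlgHom (aeval splitCoord) (aeval splitCoordInv)
    (algHom_ext fun i => by
      rw [AlgHom.comp_apply, aeval_X, aeval_splitCoord_splitCoordInv, AlgHom.id_apply])
    (algHom_ext fun i => by
      rw [AlgHom.comp_apply, aeval_X, aeval_splitCoordInv_splitCoord, AlgHom.id_apply])

def casimir : MvPolynomial (Fin 5) ℂ := X 4 ^ 2 - X 2 * X 3

theorem splitEquiv_casimir : splitEquiv casimir = (4 : ℂ) • kappa := by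
  have := C_half_mul_two (σ := Fin 5)
  have h4 : (C 4 : MvPolynomial (Fin 5) ℂ) = 4 := map_ofNat C 4
  simp [splitEquiv, casimir, splitCoord, kappa, smul_eq_C_mul, -aeval_eq_bind₁]
  grind

theorem casimir_mem_tableCenter : casimir ∈ tableCenter brTableSplit := by
  rw [mem_tableCenter_iff_forall_X]
  intro k
  rw [tableBracket_X_right]
  fin_cases k <;> simp [brTableSplit, casimir, Fin.sum_univ_five, pderiv_X, Pi.single_apply] <;>
    ring

-- `X 2 * X 3` and `X 4` generate the polynomials in `X 2, X 3, X 4` that have weight zero for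
-- the grading `deg X 2 = 1`, `deg X 3 = -1`, `deg X 4 = 0`.
def weightZeroGen : Fin 2 → MvPolynomial (Fin 5) ℂ := ![X 2 * X 3, X 4]

theorem aeval_weightZeroGen_injective : Function.Injective (aeval (R := ℂ) weightZeroGen) := by
  let restrict : MvPolynomial (Fin 5) ℂ →ₐ[ℂ] MvPolynomial (Fin 2) ℂ :=
    aeval ![0, 0, X 0, 1, X 1]
  refine Function.LeftInverse.injective (g := restrict) fun h => ?_
  rw [← AlgHom.comp_apply, show restrict.comp (aeval weightZeroGen) = AlgHom.id ℂ _ from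
    algHom_ext fun i => by fin_cases i <;> simp [restrict, weightZeroGen]]
  rfl

theorem mem_range_aeval_weightZeroGen {p : MvPolynomial (Fin 5) ℂ}
    (hp : ∀ m ∈ p.support, m 0 = 0 ∧ m 1 = 0 ∧ m 2 = m 3) :
    p ∈ (aeval (R := ℂ) weightZeroGen).range := by
  rw [p.as_sum]
  refine Subalgebra.sum_mem _ fun m hm => ⟨C (coeff m p) * X 0 ^ m 2 * X 1 ^ m 4, ?_⟩
  obtain ⟨h0, h1, h23⟩ := hp m hm
  simp [monomial_fin_five, weightZeroGen, h0, h1, h23, mul_pow]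
  ring

theorem mem_adjoin_casimir_of_mem_tableCenter {p : MvPolynomial (Fin 5) ℂ}
    (hp : p ∈ tableCenter brTableSplit) : p ∈ Algebra.adjoin ℂ {casimir} := by
  have hcol (k : Fin 5) : ∑ u, brTableSplit u k * pderiv u p = 0 :=
    tableBracket_X_right brTableSplit p k ▸ hp (X k)
  have h0 : pderiv 0 p = 0 := by simpa [brTableSplit, Fin.sum_univ_five] using hcol 1
  have h1 : pderiv 1 p = 0 := by simpa [brTableSplit, Fin.sum_univ_five] using hcol 0
  have h3 : 2 * X 4 * pderiv 2 p + X 3 * pderiv 4 p = 0 := by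
    have hd := hcol 3
    simp [brTableSplit, Fin.sum_univ_five] at hd
    refine mul_left_cancel₀ (by norm_num : (4 : MvPolynomial (Fin 5) ℂ) ≠ 0) ?_
    linear_combination hd
  have h4 : X 2 * pderiv 2 p = X 3 * pderiv 3 p := by
    have he := hcol 4
    simp [brTableSplit, Fin.sum_univ_five] at he
    refine mul_left_cancel₀ (by norm_num : (4 : MvPolynomial (Fin 5) ℂ) ≠ 0) ?_
    linear_combination he
  obtain ⟨q, rfl⟩ := mem_range_aeval_weightZeroGen fun m hm =>
    ⟨exponent_eq_zero_of_pderiv_eq_zero h0 hm, exponent_eq_zero_of_pderiv_eq_zero h1 hm,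
      exponent_eq_of_X_mul_pderiv_eq h4 hm⟩
  have hq : 2 * X 1 * pderiv 0 q + pderiv 1 q = 0 := by
    refine aeval_weightZeroGen_injective (mul_left_cancel₀ (X_ne_zero 3) ?_)
    rw [map_zero, mul_zero, ← h3]
    simp [pderiv_aeval, weightZeroGen, Fin.sum_univ_two, pderiv_X, -aeval_eq_bind₁]
    ring
  rw [show casimir = aeval weightZeroGen (X 1 ^ 2 - X 0 : MvPolynomial (Fin 2) ℂ) by
    simp [casimir, weightZeroGen, -aeval_eq_bind₁], ← AlgHom.map_adjoin_singleton]
  exact Subalgebra.mem_map.mpr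
    ⟨q, mem_adjoin_of_two_X_one_mul_pderiv_zero_add_pderiv_one hq, rfl⟩

theorem tableCenter_brTableSplit : tableCenter brTableSplit = Algebra.adjoin ℂ {casimir} :=
  le_antisymm (fun _ hp => mem_adjoin_casimir_of_mem_tableCenter hp)
    (Algebra.adjoin_le (Set.singleton_subset_iff.mpr casimir_mem_tableCenter))

theorem stmt_19 (f : MvPolynomial (Fin 5) ℂ) :
    (∀ g : MvPolynomial (Fin 5) ℂ, pb5 f g = 0) ↔
      f ∈ Algebra.adjoin ℂ ({kappa} : Set (MvPolynomial (Fin 5) ℂ)) := by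
  have hsplit : ∀ p q, tableBracket brTable (splitEquiv p) (splitEquiv q) =
      splitEquiv (tableBracket brTableSplit p q) :=
    tableBracket_aeval brTable splitCoord tableBracket_splitCoord
  have hcenter : tableCenter brTable = Algebra.adjoin ℂ {kappa} := calc
    tableCenter brTable = (tableCenter brTableSplit).map (splitEquiv : _ →ₐ[ℂ] _) :=
      (tableCenter_map brTable splitEquiv hsplit).symm
    _ = Algebra.adjoin ℂ {(4 : ℂ) • kappa} := by
      rw [tableCenter_brTableSplit, AlgHom.map_adjoin_singleton, AlgEquiv.coe_toAlgHom,
        splitEquiv_casimir]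
    _ = Algebra.adjoin ℂ {kappa} := Algebra.adjoin_singleton_smul (by norm_num) kappa
  rw [pb5_eq_tableBracket, ← mem_tableCenter, hcenter]
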